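/- Let λ be a partition of n, and define the graded dimension dim_t S^λ := (∏_{i=1}^{n} [i]_t) / (∏_{c ∈ cells(λ)} [h_c]_t), where [m]_t = (1 - t^m)/(1 - t) and h_c is the hook length of cell c. Then for every l ≥ 2, the multiplicity of the l-th cyclotomic polynomial Φ_l(t) as a factor of dim_t S^λ equals wt_l(n) - wt_l(λ) = ⌊n/l⌋ - wt_l(λ), which is a nonnegative integer. -/

import Mathlib

/-!
Both products factor into cyclotomic polynomials, `[m]_t = ∏_{1 < e ∣ m} Φ_e(t)`, so `Φ_e` occurs
`⌊n/e⌋` times in `∏_{i ≤ n} [i]_t` and as often as there are hooks divisible by `e` in the hook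
product. On the `e`-abacus of the beta-set `B = {b_i}`, the hooks in row `i` are the differences
`b_i - g` with `g < b_i` a gap of `B`; so the hooks divisible by `e` are the pairs (gap, bead) on a
common runner with the gap above the bead, and counting them runner by runner gives `lWeight e L`.
Pushing every bead up its runner lowers `∑ B = n + C(r, 2)` by exactly `e * lWeight e L` and leaves
`r` distinct positions, whose sum is at least `C(r, 2)`; hence `e * lWeight e L ≤ n`, and the
quotient is `∏_e Φ_e ^ (⌊n/e⌋ - lWeight e L)`.
-/

/-- Beta-set (first-column hook lengths with padding) of a partition given as a
weakly decreasing list of parts: `b_i = λ_i + (r - 1 - i)` (0-indexed). -/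
def betaSet (L : List ℕ) : List ℕ :=
  (List.range L.length).map (fun i => L.getD i 0 + (L.length - 1 - i))

/-- The `l`-weight of a partition: the number of rim `l`-hooks removed to reach
the `l`-core, computed on the `l`-abacus as the total number of single-runner
moves needed to push all beads up. -/
def lWeight (l : ℕ) (L : List ℕ) : ℕ :=
  ((betaSet L).map (· / l)).sum -
    ∑ j ∈ Finset.range l, (((betaSet L).filter (fun b => b % l = j)).length).choose 2

/-- Beta-set of the `l`-core: on each runner, push all beads to the lowest positions. -/
def lCoreBeta (l : ℕ) (L : List ℕ) : List ℕ :=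
  (List.range l).flatMap (fun j =>
    (List.range (((betaSet L).filter (fun b => b % l = j)).length)).map (fun k => j + l * k))

/-- The `l`-core of a partition, recovered from the pushed-up beta-set. -/
def lCore (l : ℕ) (L : List ℕ) : List ℕ :=
  (((lCoreBeta l L).mergeSort (fun a b => b ≤ a)).mapIdx
    (fun i b => b - (L.length - 1 - i))).filter (fun a => 0 < a)

/-- Hook length of the cell in row `i`, column `j` (both 0-indexed):
arm + leg + 1. -/
def hookLen (L : List ℕ) (i j : ℕ) : ℕ :=
  (L.getD i 0 - j) + ((L.drop (i + 1)).filter (fun a => j < a)).length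

open Polynomial

/-- The `t`-integer `[m]_t = 1 + t + ⋯ + t^{m-1}`. -/
noncomputable def tInt (m : ℕ) : Polynomial ℚ := ∑ i ∈ Finset.range m, X ^ i

open Finset

theorem Finset.sum_card_filter_lt {α : Type*} [LinearOrder α] (s : Finset α) :
    ∑ x ∈ s, #{y ∈ s | y < x} = (#s).choose 2 := by
  induction s using Finset.induction_on_max with
  | empty => simp
  | insert a s hlt ih =>
    have ha : a ∉ s := fun h => lt_irrefl a (hlt a h)
    have hbelow_a : {y ∈ insert a s | y < a} = s := by
      ext y
      simp only [mem_filter, mem_insert]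
      exact ⟨fun ⟨h, hy⟩ => h.resolve_left (ne_of_lt hy), fun hy => ⟨Or.inr hy, hlt y hy⟩⟩
    have hbelow : ∀ x ∈ s, {y ∈ insert a s | y < x} = {y ∈ s | y < x} := fun x hx => by
      rw [filter_insert, if_neg (not_lt.2 (hlt x hx).le)]
    rw [Finset.sum_insert ha, card_insert_of_notMem ha, Nat.choose_succ_succ', Nat.choose_one_right,
      hbelow_a, sum_congr rfl fun x hx => congrArg card (hbelow x hx), ih]

theorem Finset.choose_two_card_le_sum (s : Finset ℕ) : (#s).choose 2 ≤ ∑ x ∈ s, x := by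
  rw [← sum_card_filter_lt]
  refine sum_le_sum fun x _ => ?_
  calc #{y ∈ s | y < x} ≤ #(range x) := card_le_card fun y hy => by simpa using (mem_filter.1 hy).2
    _ = x := card_range x

theorem card_filter_modEq_range (e b : ℕ) : #{g ∈ range b | g ≡ b [MOD e]} = b / e := by
  rw [← Nat.Ioc_filter_dvd_card_eq_div]
  apply card_nbij' (b - ·) (b - ·)
  · intro g hg
    simp only [coe_filter, mem_range, Set.mem_ofPred_eq, mem_Ioc] at hg ⊢
    exact ⟨⟨by omega, by omega⟩, (Nat.modEq_iff_dvd' hg.1.le).1 hg.2⟩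
  · intro x hx
    simp only [coe_filter, mem_range, Set.mem_ofPred_eq, mem_Ioc] at hx ⊢
    refine ⟨by omega, (Nat.modEq_iff_dvd' (Nat.sub_le b x)).2 ?_⟩
    rw [Nat.sub_sub_self hx.1.2]
    exact hx.2
  · intro g hg
    simp only [coe_filter, mem_range, Set.mem_ofPred_eq] at hg
    dsimp only
    omega
  · intro x hx
    simp only [coe_filter, mem_Ioc, Set.mem_ofPred_eq] at hx
    dsimp only
    omega

section Abacus

def runnerBeadsBelow (e : ℕ) (B : Finset ℕ) (b : ℕ) : ℕ := #{x ∈ B | x ≡ b [MOD e] ∧ x < b}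

def abacusWeight (e : ℕ) (B : Finset ℕ) : ℕ :=
  ∑ b ∈ B, b / e - ∑ j ∈ range e, (#{b ∈ B | b % e = j}).choose 2

variable {e : ℕ} (B : Finset ℕ)

theorem runnerBeadsBelow_le_div (b : ℕ) : runnerBeadsBelow e B b ≤ b / e := by
  rw [← card_filter_modEq_range]
  exact card_le_card fun x hx => by
    simp only [mem_filter, mem_range] at hx ⊢
    exact ⟨hx.2.2, hx.2.1⟩

theorem runnerBeadsBelow_lt {b b' : ℕ} (hb' : b' ∈ B) (hmod : b' ≡ b [MOD e]) (hlt : b' < b) :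
    runnerBeadsBelow e B b' < runnerBeadsBelow e B b := by
  refine card_lt_card ((ssubset_iff_of_subset fun x hx => ?_).2 ⟨b', ?_, ?_⟩)
  · simp only [mem_filter] at hx ⊢
    exact ⟨hx.1, hx.2.1.trans hmod, hx.2.2.trans hlt⟩
  · simp [hb', hmod, hlt]
  · simp

theorem sum_runnerBeadsBelow (he : 0 < e) :
    ∑ b ∈ B, runnerBeadsBelow e B b = ∑ j ∈ range e, (#{b ∈ B | b % e = j}).choose 2 := by
  rw [← sum_fiberwise_of_maps_to (g := (· % e)) fun b _ => mem_range.2 (Nat.mod_lt b he)]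
  refine sum_congr rfl fun j _ => ?_
  rw [← sum_card_filter_lt]
  refine sum_congr rfl fun b hb => congrArg card ?_
  rw [filter_filter]
  refine filter_congr fun x _ => ?_
  rw [Nat.ModEq, (mem_filter.1 hb).2]

theorem card_gaps_below (b : ℕ) :
    #{g ∈ range b | g ∉ B ∧ g ≡ b [MOD e]} = b / e - runnerBeadsBelow e B b := by
  have hsplit := card_filter_add_card_filter_not (s := {g ∈ range b | g ≡ b [MOD e]}) (· ∈ B)
  have hbeads : #{g ∈ {g ∈ range b | g ≡ b [MOD e]} | g ∈ B} = runnerBeadsBelow e B b := by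
    unfold runnerBeadsBelow
    congr 1
    ext x
    simp only [mem_filter, mem_range]
    tauto
  have hgaps : #{g ∈ {g ∈ range b | g ≡ b [MOD e]} | g ∉ B} =
      #{g ∈ range b | g ∉ B ∧ g ≡ b [MOD e]} := by
    rw [filter_filter]
    simp only [and_comm]
  rw [card_filter_modEq_range, hbeads, hgaps] at hsplit
  omega

theorem sum_card_gaps_below (he : 0 < e) :
    ∑ b ∈ B, #{g ∈ range b | g ∉ B ∧ g ≡ b [MOD e]} = abacusWeight e B := by
  rw [abacusWeight, ← sum_runnerBeadsBelow B he,
    ← sum_tsub_distrib _ fun b _ => runnerBeadsBelow_le_div B b]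
  exact sum_congr rfl fun b _ => card_gaps_below B b

theorem mul_abacusWeight_add_choose_two_le (he : 0 < e) :
    e * abacusWeight e B + (#B).choose 2 ≤ ∑ b ∈ B, b := by
  rw [abacusWeight, ← sum_runnerBeadsBelow B he, Nat.mul_sub]
  set c := runnerBeadsBelow e B
  -- pushing every bead up its runner: the bead at `b` moves to `b % e + e * c b`
  have hcore_inj : Set.InjOn (fun b => b % e + e * c b) B := by
    intro b hb b' hb' h
    have hmod : b % e = b' % e := by
      simpa [Nat.add_mul_mod_self_left, Nat.mod_mod] using congrArg (· % e) h
    have hc : c b = c b' := by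
      simpa [Nat.add_mul_div_left _ _ he, Nat.div_eq_of_lt (Nat.mod_lt _ he)] using
        congrArg (· / e) h
    rcases lt_trichotomy b b' with hlt | heq | hlt
    · exact absurd hc (runnerBeadsBelow_lt B hb hmod hlt).ne
    · exact heq
    · exact absurd hc (runnerBeadsBelow_lt B hb' hmod.symm hlt).ne'
  have hcore_sum : (#B).choose 2 ≤ ∑ b ∈ B, b % e + e * ∑ b ∈ B, c b := by
    calc (#B).choose 2 = (#(B.image fun b => b % e + e * c b)).choose 2 := by
          rw [card_image_of_injOn hcore_inj]
      _ ≤ ∑ x ∈ B.image fun b => b % e + e * c b, x := choose_two_card_le_sum _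
      _ = ∑ b ∈ B, b % e + e * ∑ b ∈ B, c b := by
          rw [sum_image hcore_inj, sum_add_distrib, mul_sum]
  have hdiv : e * ∑ b ∈ B, b / e + ∑ b ∈ B, b % e = ∑ b ∈ B, b := by
    rw [mul_sum, ← sum_add_distrib]
    exact sum_congr rfl fun b _ => Nat.div_add_mod b e
  have hc_le : ∑ b ∈ B, c b ≤ ∑ b ∈ B, b / e := sum_le_sum fun b _ => runnerBeadsBelow_le_div B b
  have he_c_le := Nat.mul_le_mul_left e hc_le
  omega

end Abacus

section BetaSet

variable {L : List ℕ}

def betaNum (L : List ℕ) (i : ℕ) : ℕ := L.getD i 0 + (L.length - 1 - i)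

def betaFinset (L : List ℕ) : Finset ℕ := (betaSet L).toFinset

theorem getD_le_getD_of_le (hL : L.Pairwise (· ≥ ·)) {i k : ℕ} (h : i ≤ k) :
    L.getD k 0 ≤ L.getD i 0 := by
  by_cases hk : k < L.length
  · rw [List.getD_eq_getElem _ _ hk, List.getD_eq_getElem _ _ (h.trans_lt hk)]
    simpa using hL.rel_get_of_le (a := ⟨i, h.trans_lt hk⟩) (b := ⟨k, hk⟩) h
  · rw [List.getD_eq_default _ _ (not_lt.1 hk)]
    exact Nat.zero_le _

theorem betaNum_strictAntiOn (hL : L.Pairwise (· ≥ ·)) :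
    StrictAntiOn (betaNum L) (Set.Iio L.length) := by
  intro i _ k hk hik
  have hparts := getD_le_getD_of_le hL hik.le
  simp only [Set.mem_Iio] at hk
  unfold betaNum
  omega

theorem betaSet_nodup (hL : L.Pairwise (· ≥ ·)) : (betaSet L).Nodup :=
  List.nodup_range.map_on fun i hi k hk h =>
    (betaNum_strictAntiOn hL).injOn (by simpa using hi) (by simpa using hk) h

theorem mem_betaFinset {b : ℕ} : b ∈ betaFinset L ↔ ∃ k < L.length, betaNum L k = b := by
  simp [betaFinset, betaSet, betaNum]

theorem sum_betaFinset (hL : L.Pairwise (· ≥ ·)) (f : ℕ → ℕ) :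
    ∑ b ∈ betaFinset L, f b = ∑ i ∈ range L.length, f (betaNum L i) := by
  rw [betaFinset, List.sum_toFinset _ (betaSet_nodup hL), betaSet, List.map_map]
  rfl

theorem card_betaFinset (hL : L.Pairwise (· ≥ ·)) : #(betaFinset L) = L.length := by
  simpa using sum_betaFinset hL fun _ => 1

theorem sum_betaFinset_id (hL : L.Pairwise (· ≥ ·)) :
    ∑ b ∈ betaFinset L, b = L.sum + L.length.choose 2 := by
  have hparts : ∑ i ∈ range L.length, L.getD i 0 = L.sum := by
    simp [Finset.sum_range, List.getD_eq_getElem?_getD]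
  simp only [sum_betaFinset hL, betaNum]
  rw [sum_add_distrib, hparts,
    sum_range_reflect (fun i => i) L.length, sum_range_id, Nat.choose_two_right]

theorem lWeight_eq_abacusWeight (hL : L.Pairwise (· ≥ ·)) (e : ℕ) :
    lWeight e L = abacusWeight e (betaFinset L) := by
  have hnodup := betaSet_nodup hL
  rw [lWeight, abacusWeight, betaFinset, List.sum_toFinset _ hnodup]
  congr 1
  refine sum_congr rfl fun j _ => ?_
  rw [← List.toFinset_card_of_nodup (hnodup.filter _), List.toFinset_filter]
  simp only [decide_eq_true_eq]

theorem lWeight_le_sum_div (hL : L.Pairwise (· ≥ ·)) {e : ℕ} (he : 0 < e) :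
    lWeight e L ≤ L.sum / e := by
  have hbound := mul_abacusWeight_add_choose_two_le (betaFinset L) he
  rw [card_betaFinset hL, sum_betaFinset_id hL, ← lWeight_eq_abacusWeight hL] at hbound
  exact (Nat.le_div_iff_mul_le he).2 (by linarith)

end BetaSet

section Hooks

variable {L : List ℕ}

theorem List.length_filter_eq_sum_range (M : List ℕ) (p : ℕ → Bool) :
    (M.filter p).length = ∑ k ∈ Finset.range M.length, if p (M.getD k 0) then 1 else 0 := by
  induction M with
  | nil => simp
  | cons a M ih =>
    rw [List.filter_cons, List.length_cons, Finset.sum_range_succ']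
    by_cases h : p a <;> simp [ih, h]

theorem hookLen_eq (L : List ℕ) (i j : ℕ) :
    hookLen L i j = (L.getD i 0 - j) + #{k ∈ Ioo i L.length | j < L.getD k 0} := by
  rw [hookLen, List.length_filter_eq_sum_range, card_filter, ← Ico_add_one_left_eq_Ioo,
    sum_Ico_eq_sum_range, List.length_drop]
  simp [List.getD_eq_getElem?_getD]

theorem hookLen_pos {i j : ℕ} (hj : j < L.getD i 0) : 0 < hookLen L i j := by
  rw [hookLen_eq]
  omega

theorem lt_length_of_lt_getD {i j : ℕ} (hj : j < L.getD i 0) : i < L.length := by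
  by_contra h
  rw [List.getD_eq_default _ _ (not_lt.1 h)] at hj
  exact Nat.not_lt_zero j hj

/-- The hook of the cell `(i, j)` runs on the abacus from the bead `betaNum L i` down to the gap
`gapNum L i j`. -/
def gapNum (L : List ℕ) (i j : ℕ) : ℕ := j + #{k ∈ Ioo i L.length | L.getD k 0 ≤ j}

theorem hookLen_add_gapNum {i j : ℕ} (hj : j < L.getD i 0) :
    hookLen L i j + gapNum L i j = betaNum L i := by
  have hsplit := card_filter_add_card_filter_not (s := Ioo i L.length) (j < L.getD · 0)
  simp only [not_lt, Nat.card_Ioo] at hsplit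
  rw [hookLen_eq, gapNum, betaNum]
  omega

theorem gapNum_strictMono (L : List ℕ) (i : ℕ) : StrictMono (gapNum L i) := by
  intro j j' h
  have hcard : #{k ∈ Ioo i L.length | L.getD k 0 ≤ j} ≤ #{k ∈ Ioo i L.length | L.getD k 0 ≤ j'} :=
    card_le_card fun k hk => by
      simp only [mem_filter] at hk ⊢
      exact ⟨hk.1, hk.2.trans h.le⟩
  unfold gapNum
  omega

theorem gapNum_notMem_betaFinset (hL : L.Pairwise (· ≥ ·)) {i j : ℕ} (hj : j < L.getD i 0) :
    gapNum L i j ∉ betaFinset L := by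
  rw [mem_betaFinset]
  rintro ⟨k, hk, hbead⟩
  have hi := lt_length_of_lt_getD hj
  have hgap := hookLen_add_gapNum hj
  rcases le_or_gt k i with hki | hik
  · have hbead_above := (betaNum_strictAntiOn hL).antitoneOn hk hi hki
    have hhook := hookLen_pos hj
    omega
  have hbk : betaNum L k = L.getD k 0 + (L.length - 1 - k) := rfl
  rcases lt_or_ge j (L.getD k 0) with hjk | hkj
  · have hsub : {k' ∈ Ioo i L.length | L.getD k' 0 ≤ j} ⊆ Ioo k L.length := fun k' hk' => by
      simp only [mem_filter, mem_Ioo] at hk' ⊢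
      refine ⟨lt_of_not_ge fun hk'k => ?_, hk'.1.2⟩
      have hpart := getD_le_getD_of_le hL hk'k
      omega
    have hcard := card_le_card hsub
    rw [Nat.card_Ioo] at hcard
    unfold gapNum at hbead
    omega
  · have hsub : Ico k L.length ⊆ {k' ∈ Ioo i L.length | L.getD k' 0 ≤ j} := fun k' hk' => by
      simp only [mem_filter, mem_Ioo, mem_Ico] at hk' ⊢
      exact ⟨⟨hik.trans_le hk'.1, hk'.2⟩, (getD_le_getD_of_le hL hk'.1).trans hkj⟩
    have hcard := card_le_card hsub
    rw [Nat.card_Ico] at hcard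
    unfold gapNum at hbead
    omega

theorem card_filter_betaFinset_lt (hL : L.Pairwise (· ≥ ·)) {i : ℕ} (hi : i < L.length) :
    #{b ∈ betaFinset L | b < betaNum L i} = L.length - 1 - i := by
  have hanti := betaNum_strictAntiOn hL
  have hbelow : {b ∈ betaFinset L | b < betaNum L i} = (Ioo i L.length).image (betaNum L) := by
    ext b
    simp only [mem_filter, mem_betaFinset, mem_image, mem_Ioo]
    constructor
    · rintro ⟨⟨k, hk, rfl⟩, hlt⟩
      exact ⟨k, ⟨(hanti.lt_iff_gt hk hi).1 hlt, hk⟩, rfl⟩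
    · rintro ⟨k, ⟨hik, hk⟩, rfl⟩
      exact ⟨⟨k, hk, rfl⟩, hanti hi hk hik⟩
  rw [hbelow, card_image_of_injOn (hanti.injOn.mono fun k hk => (mem_Ioo.1 hk).2), Nat.card_Ioo]
  omega

theorem image_gapNum (hL : L.Pairwise (· ≥ ·)) {i : ℕ} (hi : i < L.length) :
    (range (L.getD i 0)).image (gapNum L i) = {g ∈ range (betaNum L i) | g ∉ betaFinset L} := by
  apply eq_of_subset_of_card_le
  · intro g hg
    obtain ⟨j, hj, rfl⟩ := mem_image.1 hg
    rw [mem_range] at hj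
    have hgap := hookLen_add_gapNum hj
    have hhook := hookLen_pos hj
    exact mem_filter.2 ⟨mem_range.2 (by omega), gapNum_notMem_betaFinset hL hj⟩
  · have hsplit := card_filter_add_card_filter_not (s := range (betaNum L i)) (· ∈ betaFinset L)
    have hbeads : {g ∈ range (betaNum L i) | g ∈ betaFinset L} =
        {b ∈ betaFinset L | b < betaNum L i} := by
      ext
      simp [and_comm]
    rw [hbeads, card_filter_betaFinset_lt hL hi, card_range] at hsplit
    rw [card_image_of_injective _ (gapNum_strictMono L i).injective, card_range]
    have hbeta : betaNum L i = L.getD i 0 + (L.length - 1 - i) := rfl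
    omega

theorem card_filter_hookLen_dvd (hL : L.Pairwise (· ≥ ·)) {i : ℕ} (hi : i < L.length) (e : ℕ) :
    #{j ∈ range (L.getD i 0) | e ∣ hookLen L i j} =
      #{g ∈ range (betaNum L i) | g ∉ betaFinset L ∧ g ≡ betaNum L i [MOD e]} := by
  rw [← filter_filter, ← image_gapNum hL hi, filter_image,
    card_image_of_injective _ (gapNum_strictMono L i).injective]
  congr 1
  refine filter_congr fun j hj => ?_
  have hgap := hookLen_add_gapNum (mem_range.1 hj)
  rw [Nat.modEq_iff_dvd' (by omega), ← hgap, Nat.add_sub_cancel]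

theorem sum_card_filter_hookLen_dvd (hL : L.Pairwise (· ≥ ·)) {e : ℕ} (he : 0 < e) :
    ∑ i ∈ range L.length, #{j ∈ range (L.getD i 0) | e ∣ hookLen L i j} = lWeight e L := by
  rw [lWeight_eq_abacusWeight hL, ← sum_card_gaps_below _ he, sum_betaFinset hL]
  exact sum_congr rfl fun i hi => card_filter_hookLen_dvd hL (mem_range.1 hi) e

/-- A hook longer than `L.sum` would be a hook divisible by its own length, but there are only
`lWeight h L ≤ L.sum / h = 0` of those. -/
theorem hookLen_le_sum (hL : L.Pairwise (· ≥ ·)) {i j : ℕ} (hj : j < L.getD i 0) :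
    hookLen L i j ≤ L.sum := by
  by_contra! hlong
  have hpos : 0 < hookLen L i j := hookLen_pos hj
  have hcell : 0 < #{j' ∈ range (L.getD i 0) | hookLen L i j ∣ hookLen L i j'} :=
    card_pos.2 ⟨j, mem_filter.2 ⟨mem_range.2 hj, dvd_rfl⟩⟩
  have hweight := (sum_card_filter_hookLen_dvd hL hpos).symm ▸
    single_le_sum (fun _ _ => Nat.zero_le _) (mem_range.2 (lt_length_of_lt_getD hj))
  have hbound := lWeight_le_sum_div hL hpos
  rw [Nat.div_eq_of_lt hlong] at hbound
  omega

end Hooks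

theorem prod_tInt_eq_prod_cyclotomic_pow {ι : Type*} (A : Finset ι) (v : ι → ℕ) (N : ℕ)
    (hv : ∀ a ∈ A, 0 < v a ∧ v a ≤ N) :
    ∏ a ∈ A, tInt (v a) = ∏ e ∈ Icc 2 N, cyclotomic e ℚ ^ #{a ∈ A | e ∣ v a} := by
  rw [prod_congr rfl fun a ha =>
      show tInt (v a) = _ from (prod_cyclotomic_eq_geom_sum (hv a ha).1 ℚ).symm,
    prod_comm' (t' := Icc 2 N) (s' := fun e => {a ∈ A | e ∣ v a}) fun a e => ?_]
  · exact prod_congr rfl fun e _ => prod_const _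
  · simp only [mem_erase, Nat.mem_divisors, mem_filter, mem_Icc]
    constructor
    · rintro ⟨ha, he1, hdvd, -⟩
      have he_le := (Nat.le_of_dvd (hv a ha).1 hdvd).trans (hv a ha).2
      have he0 : e ≠ 0 := by rintro rfl; exact (hv a ha).1.ne' (Nat.eq_zero_of_zero_dvd hdvd)
      exact ⟨⟨ha, hdvd⟩, by omega, he_le⟩
    · rintro ⟨⟨ha, hdvd⟩, he2, -⟩
      exact ⟨ha, by omega, hdvd, (hv a ha).1.ne'⟩

theorem prod_range_tInt_succ (n : ℕ) :
    ∏ i ∈ range n, tInt (i + 1) = ∏ e ∈ Icc 2 n, cyclotomic e ℚ ^ (n / e) := by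
  rw [range_eq_Ico, prod_Ico_add', Ico_add_one_add_one_eq_Ioc,
    prod_tInt_eq_prod_cyclotomic_pow _ (fun x => x) n fun x hx => mem_Ioc.1 hx]
  simp only [Nat.Ioc_filter_dvd_card_eq_div]

theorem emultiplicity_cyclotomic_prod_pow {l : ℕ} (hl : 0 < l) (s : Finset ℕ) (f : ℕ → ℕ) :
    emultiplicity (cyclotomic l ℚ) (∏ e ∈ s, cyclotomic e ℚ ^ f e) =
      if l ∈ s then (f l : ℕ∞) else 0 := by
  have hprime : Prime (cyclotomic l ℚ) := (cyclotomic.irreducible_rat hl).prime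
  rw [Finset.emultiplicity_prod hprime, ← sum_ite_eq' s l fun e => (f e : ℕ∞)]
  refine sum_congr rfl fun e _ => ?_
  split_ifs with h
  · rw [h, emultiplicity_pow_self_of_prime hprime]
  · refine emultiplicity_eq_zero.2 fun hdvd => hprime.not_isUnit ?_
    exact (cyclotomic.isCoprime_rat (Ne.symm h)).isUnit_of_dvd' dvd_rfl (hprime.dvd_of_dvd_pow hdvd)

theorem prod_hookLen_tInt {L : List ℕ} (hL : L.Pairwise (· ≥ ·)) :
    ∏ i ∈ range L.length, ∏ j ∈ range (L.getD i 0), tInt (hookLen L i j) =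
      ∏ e ∈ Icc 2 L.sum, cyclotomic e ℚ ^ lWeight e L := by
  rw [prod_sigma', prod_tInt_eq_prod_cyclotomic_pow _ _ L.sum fun x hx => ?_]
  · refine prod_congr rfl fun e he => ?_
    rw [filter_sigma' _ _ fun i j => e ∣ hookLen L i j, card_sigma,
      sum_card_filter_hookLen_dvd hL (by linarith [(mem_Icc.1 he).1])]
  · have hj := mem_range.1 (mem_sigma.1 hx).2
    exact ⟨hookLen_pos hj, hookLen_le_sum hL hj⟩

theorem statement3_general (n : ℕ) (L : List ℕ) (hsorted : L.Pairwise (· ≥ ·))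
    (hsum : L.sum = n) (l : ℕ) (hl : 2 ≤ l) :
    lWeight l L ≤ n / l ∧
    ∃ P : Polynomial ℚ,
      (∏ i ∈ Finset.range n, tInt (i + 1)) =
        (∏ i ∈ Finset.range L.length, ∏ j ∈ Finset.range (L.getD i 0),
          tInt (hookLen L i j)) * P ∧
      (cyclotomic l ℚ) ^ (n / l - lWeight l L) ∣ P ∧
      ¬ (cyclotomic l ℚ) ^ (n / l - lWeight l L + 1) ∣ P := by
  subst hsum
  have hweight : ∀ e ∈ Icc 2 L.sum, lWeight e L ≤ L.sum / e := fun e he =>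
    lWeight_le_sum_div hsorted (by linarith [(mem_Icc.1 he).1])
  refine ⟨lWeight_le_sum_div hsorted (by omega),
    ∏ e ∈ Icc 2 L.sum, cyclotomic e ℚ ^ (L.sum / e - lWeight e L), ?_, ?_⟩
  · rw [prod_range_tInt_succ, prod_hookLen_tInt hsorted, ← prod_mul_distrib]
    exact prod_congr rfl fun e he => by rw [← pow_add, Nat.add_sub_cancel' (hweight e he)]
  · rw [← emultiplicity_eq_coe, emultiplicity_cyclotomic_prod_pow (by omega)]
    split_ifs with hmem
    · rfl
    · rw [Nat.div_eq_of_lt (by simp only [mem_Icc, not_and, not_le] at hmem; exact hmem hl)]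
      simp

/-- The graded dimension `dim_t S^λ = (∏_{i=1}^n [i]_t) / (∏_{c} [h_c]_t)` is a
polynomial, and for every `l ≥ 2` the multiplicity of the `l`-th cyclotomic
polynomial in it is exactly `⌊n/l⌋ - wt_l(λ)`, a nonnegative integer. -/
theorem statement3 (n : ℕ) (L : List ℕ) (hsorted : L.Pairwise (· ≥ ·))
    (hpos : ∀ a ∈ L, 0 < a) (hsum : L.sum = n) (l : ℕ) (hl : 2 ≤ l) :
    lWeight l L ≤ n / l ∧
    ∃ P : Polynomial ℚ,
      (∏ i ∈ Finset.range n, tInt (i + 1)) =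
        (∏ i ∈ Finset.range L.length, ∏ j ∈ Finset.range (L.getD i 0),
          tInt (hookLen L i j)) * P ∧
      (cyclotomic l ℚ) ^ (n / l - lWeight l L) ∣ P ∧
      ¬ (cyclotomic l ℚ) ^ (n / l - lWeight l L + 1) ∣ P :=
  statement3_general n L hsorted hsum l hl
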